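/- arXiv:2203.15500 — 3 statements merged into one kernel-verified Lean document; each statement's English description precedes it below -/
import Mathlib

section
/- (Proposition 1, full-matrix part.) For every t ≥ 1, the matrix estimator A^u(t) := (1/μ²)(y_{t+1} y_tᵀ − y_{t+2} y_{t−1}ᵀ) is an unbiased estimator of A, i.e. E[A^u(t)] = A (entrywise). -/
/-!
Unrolling the recursion gives `y t = μ ∑_{s ≤ t} A^(t-s) x s`, and the coordinates of the `x s`
are orthonormal in `L²(P)` (independent, centred, unit variance). Hence
`E[y (b+d) y bᵀ] = μ² ∑_{k ≤ b} A^(d+k) (A^k)ᵀ`, which for symmetric `A` is `μ² ∑_{k ≤ b} A^(d+2k)`.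
The two covariances in the estimator are then `μ² ∑_{k ≤ t} A^(2k+1)` and `μ² ∑_{1 ≤ k ≤ t} A^(2k+1)`,
whose difference is `μ² A`.
-/

open MeasureTheory ProbabilityTheory Matrix Finset

lemma ProbabilityTheory.HasLaw.memLp_gaussianReal {Ω : Type*} [MeasurableSpace Ω] {P : Measure Ω}
    {Y : Ω → ℝ} {m : ℝ} {v : NNReal} (hY : HasLaw Y (gaussianReal m v) P)
    (p : ENNReal) (hp : p ≠ ⊤) : MemLp Y p P := by
  have h := memLp_id_gaussianReal' (μ := m) (v := v) p hp
  rw [← hY.map_eq] at h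
  exact (memLp_map_measure_iff aestronglyMeasurable_id hY.aemeasurable).mp h

section Orthonormal

variable {Ω ι : Type*} [MeasurableSpace Ω] [DecidableEq ι] {P : Measure Ω} {X : ι → Ω → ℝ}

lemma integral_mul_eq_ite_of_indepFun_gaussianReal [IsProbabilityMeasure P]
    (hindep : Pairwise fun p q => IndepFun (X p) (X q) P)
    (hX : ∀ p, HasLaw (X p) (gaussianReal 0 1) P) (p q : ι) :
    ∫ ω, X p ω * X q ω ∂P = if p = q then 1 else 0 := by
  have hL2 (p : ι) : MemLp (X p) 2 P := (hX p).memLp_gaussianReal 2 (by simp)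
  have hmean (p : ι) : ∫ ω, X p ω ∂P = 0 := by
    rw [(hX p).integral_eq, integral_id_gaussianReal]
  have hcov : ∫ ω, X p ω * X q ω ∂P = cov[X p, X q; P] := by
    rw [covariance_eq_sub (hL2 p) (hL2 q), hmean p, hmean q, mul_zero, sub_zero, Pi.mul_def]
  rw [hcov]
  split_ifs with hpq
  · subst hpq
    rw [covariance_self (hX p).aemeasurable, (hX p).variance_eq, variance_id_gaussianReal]
    rfl
  · exact (hindep hpq).covariance_eq_zero (hL2 p) (hL2 q)

lemma integral_sum_mul_sum_of_orthonormal (hX : ∀ p, MemLp (X p) 2 P)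
    (horth : ∀ p q, ∫ ω, X p ω * X q ω ∂P = if p = q then 1 else 0)
    (s t : Finset ι) (c d : ι → ℝ) :
    ∫ ω, (∑ p ∈ s, c p * X p ω) * (∑ q ∈ t, d q * X q ω) ∂P = ∑ p ∈ s ∩ t, c p * d p := by
  have hexpand (ω : Ω) : (∑ p ∈ s, c p * X p ω) * (∑ q ∈ t, d q * X q ω)
      = ∑ p ∈ s, ∑ q ∈ t, c p * d q * (X p ω * X q ω) := by
    rw [sum_mul_sum]
    simp only [mul_mul_mul_comm]
  have hint (p q : ι) : Integrable (fun ω => c p * d q * (X p ω * X q ω)) P :=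
    ((hX p).integrable_mul (hX q)).const_mul _
  simp only [hexpand, integral_finsetSum _ fun p _ => integrable_finsetSum _ fun q _ => hint p q,
    integral_finsetSum _ fun q _ => hint _ q, integral_const_mul, horth, mul_ite, mul_one,
    mul_zero, sum_ite_eq, ← sum_filter, filter_mem_eq_inter]

end Orthonormal

lemma Matrix.eq_sum_pow_mulVec_of_eq_mulVec_add {n R : Type*} [Fintype n] [DecidableEq n]
    [CommSemiring R] {A : Matrix n n R} {y u : ℕ → n → R} (h0 : y 0 = u 0)
    (hsucc : ∀ t, y (t + 1) = A *ᵥ y t + u (t + 1)) (t : ℕ) :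
    y t = ∑ s ∈ range (t + 1), (A ^ (t - s)) *ᵥ u s := by
  induction t with
  | zero => simp [h0]
  | succ t ih =>
    rw [hsucc, ih, mulVec_sum, sum_range_succ _ (t + 1), Nat.sub_self, pow_zero, one_mulVec]
    congr 1
    refine sum_congr rfl fun s hs => ?_
    rw [mulVec_mulVec, ← pow_succ', Nat.sub_add_comm (mem_range_succ_iff.mp hs)]

lemma Matrix.IsSymm.pow_mul_transpose_pow {n R : Type*} [Fintype n] [DecidableEq n]
    [CommSemiring R] {A : Matrix n n R} (hA : A.IsSymm) (a b : ℕ) :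
    A ^ a * (A ^ b)ᵀ = A ^ (a + b) := by
  rw [(hA.pow b).eq, pow_add]

section LinearProcess

variable {Ω n : Type*} [Fintype n] [DecidableEq n] {A : Matrix n n ℝ} {μ : ℝ}
  {x y : ℕ → Ω → n → ℝ}

lemma apply_eq_sum_mul_of_eq_mulVec_add (hy0 : ∀ ω, y 0 ω = μ • x 0 ω)
    (hyrec : ∀ t ω, y (t + 1) ω = A *ᵥ y t ω + μ • x (t + 1) ω) (t : ℕ) (ω : Ω) (i : n) :
    y t ω i = ∑ p ∈ range (t + 1) ×ˢ univ, μ * (A ^ (t - p.1)) i p.2 * x p.1 ω p.2 := by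
  rw [eq_sum_pow_mulVec_of_eq_mulVec_add (y := fun t => y t ω) (u := fun s => μ • x s ω) (hy0 ω)
    (fun t => hyrec t ω) t, Finset.sum_apply, sum_product]
  refine sum_congr rfl fun s _ => ?_
  simp only [Pi.smul_apply, smul_eq_mul, mulVec, dotProduct]
  exact sum_congr rfl fun k _ => by ring

variable [MeasurableSpace Ω] {P : Measure Ω}

lemma memLp_two_apply_of_eq_mulVec_add (hx : ∀ p : ℕ × n, MemLp (fun ω => x p.1 ω p.2) 2 P)
    (hy0 : ∀ ω, y 0 ω = μ • x 0 ω)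
    (hyrec : ∀ t ω, y (t + 1) ω = A *ᵥ y t ω + μ • x (t + 1) ω) (t : ℕ) (i : n) :
    MemLp (fun ω => y t ω i) 2 P := by
  simp_rw [apply_eq_sum_mul_of_eq_mulVec_add hy0 hyrec]
  exact memLp_finsetSum _ fun p _ => (hx p).const_mul _

lemma integral_apply_mul_apply_of_eq_mulVec_add
    (hx : ∀ p : ℕ × n, MemLp (fun ω => x p.1 ω p.2) 2 P)
    (horth : ∀ p q : ℕ × n, ∫ ω, x p.1 ω p.2 * x q.1 ω q.2 ∂P = if p = q then 1 else 0)
    (hy0 : ∀ ω, y 0 ω = μ • x 0 ω)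
    (hyrec : ∀ t ω, y (t + 1) ω = A *ᵥ y t ω + μ • x (t + 1) ω) (b d : ℕ) (i j : n) :
    ∫ ω, y (b + d) ω i * y b ω j ∂P
      = μ ^ 2 * ∑ k ∈ range (b + 1), (A ^ (d + k) * (A ^ k)ᵀ) i j := by
  simp_rw [apply_eq_sum_mul_of_eq_mulVec_add hy0 hyrec]
  refine (integral_sum_mul_sum_of_orthonormal (X := fun (p : ℕ × n) ω => x p.1 ω p.2)
    hx horth _ _ _ _).trans ?_
  rw [inter_eq_right.mpr (product_subset_product (range_subset_range.mpr (by omega)) subset_rfl),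
    sum_product, mul_sum, ← sum_range_reflect]
  refine sum_congr rfl fun s hs => ?_
  have hs : s ≤ b := mem_range_succ_iff.mp hs
  rw [mul_apply, mul_sum]
  refine sum_congr rfl fun k _ => ?_
  rw [transpose_apply, show b + d - (b + 1 - 1 - s) = d + s by omega,
    show b - (b + 1 - 1 - s) = s by omega]
  ring

end LinearProcess

theorem estimator_unbiased_full_general
    {Ω : Type*} [MeasurableSpace Ω] (P : Measure Ω) [IsProbabilityMeasure P]
    (N : ℕ) (μ : ℝ) (hμ : μ ∈ Set.Ioo (0 : ℝ) 1)
    (A : Matrix (Fin N) (Fin N) ℝ) (hA : A.IsSymm)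
    (x : ℕ → Ω → Fin N → ℝ)
    (hxindep : iIndepFun (m := fun _ : ℕ × Fin N => (inferInstance : MeasurableSpace ℝ))
      (fun p ω => x p.1 ω p.2) P)
    (hxgauss : ∀ t k, P.map (fun ω => x t ω k) = gaussianReal 0 1)
    (y : ℕ → Ω → Fin N → ℝ)
    (hy0 : ∀ ω, y 0 ω = μ • x 0 ω)
    (hyrec : ∀ t ω, y (t + 1) ω = A.mulVec (y t ω) + μ • x (t + 1) ω)
    (t : ℕ) (ht : 1 ≤ t) :
    (Matrix.of fun i j =>
        ∫ ω, (μ ^ 2)⁻¹ * (y (t + 1) ω i * y t ω j - y (t + 2) ω i * y (t - 1) ω j) ∂P)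
      = A := by
  obtain ⟨m, rfl⟩ : ∃ m, t = m + 1 := ⟨t - 1, by omega⟩
  have hlaw (p : ℕ × Fin N) : HasLaw (fun ω => x p.1 ω p.2) (gaussianReal 0 1) P :=
    ⟨.of_map_ne_zero (hxgauss p.1 p.2 ▸ IsProbabilityMeasure.ne_zero _), hxgauss p.1 p.2⟩
  have hL2 (p : ℕ × Fin N) := (hlaw p).memLp_gaussianReal 2 (by simp)
  have horth := integral_mul_eq_ite_of_indepFun_gaussianReal
    (fun p q hpq => hxindep.indepFun hpq) hlaw
  have hint (a b : ℕ) (i j : Fin N) : Integrable (fun ω => y a ω i * y b ω j) P :=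
    (memLp_two_apply_of_eq_mulVec_add hL2 hy0 hyrec a i).integrable_mul
      (memLp_two_apply_of_eq_mulVec_add hL2 hy0 hyrec b j)
  have hcov (b d : ℕ) (i j : Fin N) :
      ∫ ω, y (b + d) ω i * y b ω j ∂P = μ ^ 2 * ∑ k ∈ range (b + 1), (A ^ (d + 2 * k)) i j := by
    simp only [integral_apply_mul_apply_of_eq_mulVec_add hL2 horth hy0 hyrec,
      hA.pow_mul_transpose_pow, two_mul, add_assoc]
  have hshift (k : ℕ) : 1 + 2 * (k + 1) = 3 + 2 * k := by ring
  ext i j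
  rw [of_apply, integral_const_mul, integral_sub (hint _ _ i j) (hint _ _ i j), hcov (m + 1) 1,
    Nat.add_sub_cancel, show m + 1 + 2 = m + 3 from rfl, hcov m 3, sum_range_succ']
  simp only [hshift, mul_zero, add_zero, pow_one, ← mul_sub, add_sub_cancel_left]
  exact inv_mul_cancel_left₀ (pow_ne_zero 2 hμ.1.ne') _

/-- Proposition 1 (full-matrix part): for every `t ≥ 1`, the matrix estimator
`Aᵘ(t) = (1/μ²)(y_{t+1} yₜᵀ − y_{t+2} y_{t−1}ᵀ)` is an unbiased estimator of `A`,
i.e. `E[Aᵘ(t)] = A` entrywise. -/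
theorem estimator_unbiased_full
    {Ω : Type*} [MeasurableSpace Ω] (P : Measure Ω) [IsProbabilityMeasure P]
    (N : ℕ) (hN : 1 ≤ N) (μ : ℝ) (hμ : μ ∈ Set.Ioo (0 : ℝ) 1)
    (A : Matrix (Fin N) (Fin N) ℝ) (hA : A.IsSymm)
    (x : ℕ → Ω → Fin N → ℝ)
    (hxmeas : ∀ t k, Measurable (fun ω => x t ω k))
    (hxindep : iIndepFun (m := fun _ : ℕ × Fin N => (inferInstance : MeasurableSpace ℝ))
      (fun p ω => x p.1 ω p.2) P)
    (hxgauss : ∀ t k, P.map (fun ω => x t ω k) = gaussianReal 0 1)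
    (y : ℕ → Ω → Fin N → ℝ)
    (hy0 : ∀ ω, y 0 ω = μ • x 0 ω)
    (hyrec : ∀ t ω, y (t + 1) ω = A.mulVec (y t ω) + μ • x (t + 1) ω)
    (t : ℕ) (ht : 1 ≤ t) :
    (Matrix.of fun i j =>
        ∫ ω, (μ ^ 2)⁻¹ * (y (t + 1) ω i * y t ω j - y (t + 2) ω i * y (t - 1) ω j) ∂P)
      = A :=
  estimator_unbiased_full_general P N μ hμ A hA x hxindep hxgauss y hy0 hyrec t ht
end

section
/- For every j ≥ 1 and all times k ≠ t, the summed cross-covariance of the matrices x_{k+j} y_kᵀ and x_{t+j} y_tᵀ vanishes: Tr[Cov(x_{k+j} y_kᵀ, x_{t+j} y_tᵀ)] = Σ_{a,b=1}^N Cov((x_{k+j} y_kᵀ)_{ab}, (x_{t+j} y_tᵀ)_{ab}) = 0. -/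
open MeasureTheory ProbabilityTheory Matrix Filter

/-!
By symmetry let `k < t`. The state `y_s` is a function of the noise up to time `s`, so
`x_{k+j} y_k` and `y_t` are functions of the noise before time `t + j`. The coordinate
`x_{t+j}(a)` is independent of that noise and has mean zero, hence both
`E[(x_{k+j} y_kᵀ)_{ab} (x_{t+j} y_tᵀ)_{ab}]` and `E[(x_{t+j} y_tᵀ)_{ab}]` vanish.
-/

lemma integral_eq_of_map_eq_gaussianReal {Ω : Type*} [MeasurableSpace Ω] {P : Measure Ω}
    {X : Ω → ℝ} {m : ℝ} {v : NNReal} (hX : AEMeasurable X P) (h : P.map X = gaussianReal m v) :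
    ∫ ω, X ω ∂P = m := by
  rw [← integral_id_gaussianReal (μ := m) (v := v), ← h]
  exact (integral_map (f := fun z => z) hX aestronglyMeasurable_id).symm

namespace NoisyLinearRecursion

variable {Ω ι : Type*} {x : ℕ → Ω → ι → ℝ}

abbrev past (x : ℕ → Ω → ι → ℝ) (n : ℕ) : MeasurableSpace Ω :=
  ⨆ p ∈ {p : ℕ × ι | p.1 < n}, MeasurableSpace.comap (fun ω => x p.1 ω p.2) inferInstance

lemma past_mono : Monotone (past x) := fun _ _ hmn =>
  biSup_mono fun _ hp => lt_of_lt_of_le hp hmn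

lemma measurable_past_coord {s n : ℕ} (hsn : s < n) (c : ι) :
    Measurable[past x n] fun ω => x s ω c :=
  Measurable.of_comap_le <| le_iSup₂ (f := fun (p : ℕ × ι) (_ : p.1 < n) =>
    MeasurableSpace.comap (fun ω => x p.1 ω p.2) inferInstance) (s, c) hsn

lemma measurable_past_state [Fintype ι] {y : ℕ → Ω → ι → ℝ} {A : Matrix ι ι ℝ} {μ : ℝ}
    (hy0 : ∀ ω, y 0 ω = μ • x 0 ω)
    (hyrec : ∀ t ω, y (t + 1) ω = A *ᵥ y t ω + μ • x (t + 1) ω) (t : ℕ) (b : ι) :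
    Measurable[past x (t + 1)] fun ω => y t ω b := by
  induction t generalizing b with
  | zero =>
    simp_rw [hy0, Pi.smul_apply, smul_eq_mul]
    exact (measurable_past_coord zero_lt_one b).const_mul μ
  | succ t ih =>
    have hdrift : Measurable[past x (t + 2)] fun ω => ∑ c, A b c * y t ω c :=
      Finset.measurable_sum _ fun c _ =>
        ((ih c).mono (past_mono t.succ.le_succ) le_rfl).const_mul _
    have hnoise : Measurable[past x (t + 2)] fun ω => μ * x (t + 1) ω b :=
      (measurable_past_coord (t + 1).lt_succ_self b).const_mul μ
    simp_rw [hyrec, Pi.add_apply, mulVec, dotProduct, Pi.smul_apply, smul_eq_mul]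
    exact hdrift.add hnoise

variable [MeasurableSpace Ω] {P : Measure Ω}

lemma past_le (hx : ∀ s c, Measurable fun ω => x s ω c) (n : ℕ) :
    past x n ≤ ‹MeasurableSpace Ω› :=
  iSup₂_le fun p _ => (hx p.1 p.2).comap_le

lemma indep_coord_past (hx : ∀ s c, Measurable fun ω => x s ω c)
    (hindep : iIndepFun (β := fun _ : ℕ × ι => ℝ) (fun p ω => x p.1 ω p.2) P) (n : ℕ) (a : ι) :
    Indep (MeasurableSpace.comap (fun ω => x n ω a) inferInstance) (past x n) P := by
  have h := indep_iSup_of_disjoint (fun p => (hx p.1 p.2).comap_le) hindep.iIndep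
    (S := {(n, a)}) (T := {p : ℕ × ι | p.1 < n})
    (Set.disjoint_singleton_left.mpr (lt_irrefl n))
  rwa [iSup_singleton] at h

lemma integral_coord_mul_eq_zero (hx : ∀ s c, Measurable fun ω => x s ω c)
    (hindep : iIndepFun (β := fun _ : ℕ × ι => ℝ) (fun p ω => x p.1 ω p.2) P)
    {n : ℕ} {a : ι} (hmean : ∫ ω, x n ω a ∂P = 0) {Z : Ω → ℝ} (hZ : Measurable[past x n] Z) :
    ∫ ω, x n ω a * Z ω ∂P = 0 := by
  have hind : IndepFun (fun ω => x n ω a) Z P := (IndepFun_iff_Indep _ _ _).mpr <|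
    indep_of_indep_of_le_right (indep_coord_past hx hindep n a) hZ.comap_le
  rw [hind.integral_fun_mul_eq_mul_integral (hx n a).aestronglyMeasurable
    (hZ.mono (past_le hx n) le_rfl).aestronglyMeasurable, hmean, zero_mul]

variable [Fintype ι] {y : ℕ → Ω → ι → ℝ} {A : Matrix ι ι ℝ} {μ : ℝ}

lemma integral_noise_mul_state_eq_zero (hx : ∀ s c, Measurable fun ω => x s ω c)
    (hindep : iIndepFun (β := fun _ : ℕ × ι => ℝ) (fun p ω => x p.1 ω p.2) P)
    (hmean : ∀ s c, ∫ ω, x s ω c ∂P = 0) (hy0 : ∀ ω, y 0 ω = μ • x 0 ω)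
    (hyrec : ∀ t ω, y (t + 1) ω = A *ᵥ y t ω + μ • x (t + 1) ω)
    {j : ℕ} (hj : 1 ≤ j) (t : ℕ) (a b : ι) :
    ∫ ω, x (t + j) ω a * y t ω b ∂P = 0 :=
  integral_coord_mul_eq_zero hx hindep (hmean _ a) <|
    (measurable_past_state hy0 hyrec t b).mono (past_mono (by omega)) le_rfl

lemma integral_noise_state_mul_noise_state_eq_zero
    (hx : ∀ s c, Measurable fun ω => x s ω c)
    (hindep : iIndepFun (β := fun _ : ℕ × ι => ℝ) (fun p ω => x p.1 ω p.2) P)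
    (hmean : ∀ s c, ∫ ω, x s ω c ∂P = 0) (hy0 : ∀ ω, y 0 ω = μ • x 0 ω)
    (hyrec : ∀ t ω, y (t + 1) ω = A *ᵥ y t ω + μ • x (t + 1) ω)
    {j : ℕ} (hj : 1 ≤ j) {k t : ℕ} (hkt : k ≠ t) (a b : ι) :
    ∫ ω, (x (k + j) ω a * y k ω b) * (x (t + j) ω a * y t ω b) ∂P = 0 := by
  wlog hlt : k < t generalizing k t
  · simp_rw [mul_comm (x (k + j) _ a * _)]
    exact this hkt.symm (by omega)
  have hZ : Measurable[past x (t + j)] fun ω => x (k + j) ω a * y k ω b * y t ω b :=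
    ((measurable_past_coord (by omega) a).mul
      ((measurable_past_state hy0 hyrec k b).mono (past_mono (by omega)) le_rfl)).mul
      ((measurable_past_state hy0 hyrec t b).mono (past_mono (by omega)) le_rfl)
  rw [← integral_coord_mul_eq_zero hx hindep (hmean _ a) hZ]
  congr 1 with ω
  ring

end NoisyLinearRecursion

theorem cross_covariance_trace_eq_zero_general
    {Ω : Type*} [MeasurableSpace Ω] (P : Measure Ω)
    (N : ℕ) (μ : ℝ)
    (A : Matrix (Fin N) (Fin N) ℝ)
    (x : ℕ → Ω → Fin N → ℝ)
    (hxmeas : ∀ t k, Measurable (fun ω => x t ω k))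
    (hxindep : iIndepFun (β := fun _ : ℕ × Fin N => ℝ)
      (fun p ω => x p.1 ω p.2) P)
    (hxgauss : ∀ t k, P.map (fun ω => x t ω k) = gaussianReal 0 1)
    (y : ℕ → Ω → Fin N → ℝ)
    (hy0 : ∀ ω, y 0 ω = μ • x 0 ω)
    (hyrec : ∀ t ω, y (t + 1) ω = A.mulVec (y t ω) + μ • x (t + 1) ω)
    (j : ℕ) (hj : 1 ≤ j) (k t : ℕ) (hkt : k ≠ t) :
    ∑ a : Fin N, ∑ b : Fin N,
        ((∫ ω, (x (k + j) ω a * y k ω b) * (x (t + j) ω a * y t ω b) ∂P)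
          - (∫ ω, x (k + j) ω a * y k ω b ∂P) * (∫ ω, x (t + j) ω a * y t ω b ∂P))
      = 0 := by
  have hmean : ∀ s c, ∫ ω, x s ω c ∂P = 0 := fun s c =>
    integral_eq_of_map_eq_gaussianReal (hxmeas s c).aemeasurable (hxgauss s c)
  refine Finset.sum_eq_zero fun a _ => Finset.sum_eq_zero fun b _ => ?_
  rw [NoisyLinearRecursion.integral_noise_state_mul_noise_state_eq_zero
      hxmeas hxindep hmean hy0 hyrec hj hkt,
    NoisyLinearRecursion.integral_noise_mul_state_eq_zero
      hxmeas hxindep hmean hy0 hyrec hj t, mul_zero, sub_zero]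

/-- For every `j ≥ 1` and all times `k ≠ t`, the summed cross-covariance of the matrices
`x_{k+j} y_kᵀ` and `x_{t+j} y_tᵀ` vanishes:
`Tr[Cov(x_{k+j} y_kᵀ, x_{t+j} y_tᵀ)] = ∑_{a,b} Cov((x_{k+j} y_kᵀ)_{ab}, (x_{t+j} y_tᵀ)_{ab}) = 0`. -/
theorem cross_covariance_trace_eq_zero
    {Ω : Type*} [MeasurableSpace Ω] (P : Measure Ω) [IsProbabilityMeasure P]
    (N : ℕ) (hN : 1 ≤ N) (μ : ℝ) (hμ : μ ∈ Set.Ioo (0 : ℝ) 1)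
    (A : Matrix (Fin N) (Fin N) ℝ) (hA : A.IsSymm)
    (x : ℕ → Ω → Fin N → ℝ)
    (hxmeas : ∀ t k, Measurable (fun ω => x t ω k))
    (hxindep : iIndepFun (β := fun _ : ℕ × Fin N => ℝ)
      (fun p ω => x p.1 ω p.2) P)
    (hxgauss : ∀ t k, P.map (fun ω => x t ω k) = gaussianReal 0 1)
    (y : ℕ → Ω → Fin N → ℝ)
    (hy0 : ∀ ω, y 0 ω = μ • x 0 ω)
    (hyrec : ∀ t ω, y (t + 1) ω = A.mulVec (y t ω) + μ • x (t + 1) ω)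
    (j : ℕ) (hj : 1 ≤ j) (k t : ℕ) (hkt : k ≠ t) :
    ∑ a : Fin N, ∑ b : Fin N,
        ((∫ ω, (x (k + j) ω a * y k ω b) * (x (t + j) ω a * y t ω b) ∂P)
          - (∫ ω, x (k + j) ω a * y k ω b ∂P) * (∫ ω, x (t + j) ω a * y t ω b ∂P))
      = 0 :=
  cross_covariance_trace_eq_zero_general P N μ A x hxmeas hxindep hxgauss y hy0 hyrec j hj k t hkt
end

section
/- For every j ≥ 1 and every n ≥ 1, the total variance of the sample average (1/n) Σ_{t=1}^n x_{t+j} y_tᵀ equals (N/n²) · Σ_{t=1}^n Tr[R_0(t)], where R_0(t) := E[y_t y_tᵀ]; that is, Σ_{a,b=1}^N Var(((1/n) Σ_{t=1}^n x_{t+j} y_tᵀ)_{ab}) = (N/n²) Tr[Σ_{t=1}^n R_0(t)]. -/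
open MeasureTheory ProbabilityTheory Matrix Filter

/-!
Write the `(a, b)` entry as `∑ₜ ξₜ ηₜ` with `ξₜ = x_{t+j}(a)` and `ηₜ = yₜ(b)`. The recursion makes
`yₜ` a function of `x₀, …, xₜ`, so, as `j ≥ 1`, the standard Gaussian `ξₜ` is independent of the
past `σ(xₛ : s < t + j)`, which contains `ηₜ` and every `ξₛ, ηₛ` with `s < t`. The summands are
therefore centred and pairwise uncorrelated, and `Var(ξₜ ηₜ) = E[ξₜ²] E[ηₜ²] = E[ηₜ²]`; summing
over `a` produces the factor `N`.
-/

section Transform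

variable {Ω : Type*} {m0 : MeasurableSpace Ω} {P : Measure Ω}

lemma indepFun_of_indep_comap {X Z : Ω → ℝ} {m : MeasurableSpace Ω}
    (h : Indep (MeasurableSpace.comap X inferInstance) m P) (hZ : Measurable[m] Z) :
    X ⟂ᵢ[P] Z :=
  (IndepFun_iff_Indep _ _ _).2 (indep_of_indep_of_le_right h hZ.comap_le)

lemma ProbabilityTheory.IndepFun.memLp_two_mul {X Y : Ω → ℝ} (hXY : X ⟂ᵢ[P] Y) (hX : MemLp X 2 P)
    (hY : MemLp Y 2 P) : MemLp (fun ω => X ω * Y ω) 2 P := by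
  refine (memLp_two_iff_integrable_sq (hX.1.mul hY.1)).2 ?_
  have hsq : (fun ω => X ω ^ 2) ⟂ᵢ[P] (fun ω => Y ω ^ 2) :=
    hXY.comp (measurable_id.pow_const 2) (measurable_id.pow_const 2)
  simpa only [Pi.mul_def, mul_pow] using hsq.integrable_mul hX.integrable_sq hY.integrable_sq

variable {𝓕 : Filtration ℕ m0} {ξ η : ℕ → Ω → ℝ}

theorem variance_sum_mul_eq_sum_integral_sq [IsProbabilityMeasure P]
    (hξm : ∀ t, Measurable[𝓕 (t + 1)] (ξ t))
    (hξi : ∀ t, Indep (MeasurableSpace.comap (ξ t) inferInstance) (𝓕 t) P)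
    (hξ2 : ∀ t, MemLp (ξ t) 2 P) (hξ0 : ∀ t, P[ξ t] = 0) (hξ1 : ∀ t, Var[ξ t; P] = 1)
    (hηm : ∀ t, Measurable[𝓕 t] (η t)) (hη2 : ∀ t, MemLp (η t) 2 P) (T : Finset ℕ) :
    Var[fun ω => ∑ t ∈ T, ξ t ω * η t ω; P] = ∑ t ∈ T, ∫ ω, η t ω ^ 2 ∂P := by
  have hind : ∀ t, ξ t ⟂ᵢ[P] η t := fun t => indepFun_of_indep_comap (hξi t) (hηm t)
  have hW2 : ∀ t, MemLp (fun ω => ξ t ω * η t ω) 2 P := fun t =>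
    (hind t).memLp_two_mul (hξ2 t) (hη2 t)
  have hW0 : ∀ t, ∫ ω, ξ t ω * η t ω ∂P = 0 := fun t => by
    rw [(hind t).integral_fun_mul_eq_mul_integral (hξ2 t).1 (hη2 t).1, hξ0, zero_mul]
  have hcross : ∀ s t, s < t → ∫ ω, (ξ s ω * η s ω) * (ξ t ω * η t ω) ∂P = 0 := by
    intro s t hst
    have hpast : Measurable[𝓕 t] (fun ω => ξ s ω * η s ω * η t ω) :=
      (((hξm s).mono (𝓕.mono hst) le_rfl).mul ((hηm s).mono (𝓕.mono hst.le) le_rfl)).mul (hηm t)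
    calc ∫ ω, (ξ s ω * η s ω) * (ξ t ω * η t ω) ∂P
        = ∫ ω, ξ t ω * (ξ s ω * η s ω * η t ω) ∂P := by congr 1; ext ω; ring
      _ = 0 := by
        rw [(indepFun_of_indep_comap (hξi t) hpast).integral_fun_mul_eq_mul_integral (hξ2 t).1
          (hpast.mono (𝓕.le t) le_rfl).aestronglyMeasurable, hξ0, zero_mul]
  have hdiag : ∀ t, ∫ ω, (ξ t ω * η t ω) * (ξ t ω * η t ω) ∂P = ∫ ω, η t ω ^ 2 ∂P := by
    intro t
    have hsq : (fun ω => ξ t ω ^ 2) ⟂ᵢ[P] (fun ω => η t ω ^ 2) :=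
      (hind t).comp (measurable_id.pow_const 2) (measurable_id.pow_const 2)
    have hξsq : ∫ ω, ξ t ω ^ 2 ∂P = 1 := by
      rw [← hξ1 t, variance_of_integral_eq_zero (hξ2 t).1.aemeasurable (hξ0 t)]
    calc ∫ ω, (ξ t ω * η t ω) * (ξ t ω * η t ω) ∂P
        = ∫ ω, ξ t ω ^ 2 * η t ω ^ 2 ∂P := by congr 1; ext ω; ring
      _ = ∫ ω, η t ω ^ 2 ∂P := by
        rw [hsq.integral_fun_mul_eq_mul_integral ((hξ2 t).1.pow 2) ((hη2 t).1.pow 2), hξsq, one_mul]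
  have hcov : ∀ s t, cov[fun ω => ξ s ω * η s ω, fun ω => ξ t ω * η t ω; P]
      = if s = t then ∫ ω, η t ω ^ 2 ∂P else 0 := by
    intro s t
    rw [covariance_eq_sub (hW2 s) (hW2 t), hW0, hW0, mul_zero, sub_zero, Pi.mul_def]
    rcases lt_trichotomy s t with hst | rfl | hts
    · rw [if_neg hst.ne]; exact hcross s t hst
    · rw [if_pos rfl]; exact hdiag s
    · rw [if_neg hts.ne', ← hcross t s hts]; congr 1; ext ω; ring
  rw [variance_fun_sum' fun t _ => hW2 t]
  refine Finset.sum_congr rfl fun s hs => ?_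
  rw [Finset.sum_congr rfl fun t _ => hcov s t, Finset.sum_ite_eq, if_pos hs]

end Transform

section Past

variable {Ω κ : Type*} {m0 : MeasurableSpace Ω} (x : ℕ → Ω → κ → ℝ)

abbrev pastSigma (m : ℕ) : MeasurableSpace Ω :=
  ⨆ p ∈ {p : ℕ × κ | p.1 < m}, MeasurableSpace.comap (fun ω => x p.1 ω p.2) inferInstance

variable {x}

lemma pastSigma_mono : Monotone (pastSigma x) := fun _ _ hm =>
  biSup_mono fun _ hp => lt_of_lt_of_le hp hm

lemma pastSigma_le (hx : ∀ s k, Measurable (fun ω => x s ω k)) (m : ℕ) : pastSigma x m ≤ m0 :=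
  iSup₂_le fun p _ => (hx p.1 p.2).comap_le

lemma measurable_pastSigma {s m : ℕ} (h : s < m) (k : κ) :
    Measurable[pastSigma x m] (fun ω => x s ω k) :=
  (comap_measurable _).mono (le_iSup₂ (f := fun (p : ℕ × κ) (_ : p.1 < m) =>
    MeasurableSpace.comap (fun ω => x p.1 ω p.2) inferInstance) (s, k) h) le_rfl

lemma indep_comap_pastSigma {P : Measure Ω} (hx : ∀ s k, Measurable (fun ω => x s ω k))
    (hind : iIndepFun (fun (p : ℕ × κ) ω => x p.1 ω p.2) P) {s m : ℕ} (h : m ≤ s) (k : κ) :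
    Indep (MeasurableSpace.comap (fun ω => x s ω k) inferInstance) (pastSigma x m) P := by
  have := indep_iSup_of_disjoint (fun p => (hx p.1 p.2).comap_le) hind.iIndep
    (S := {(s, k)}) (T := {p : ℕ × κ | p.1 < m})
    (Set.disjoint_singleton_left.2 fun hp => (not_lt_of_ge h) hp)
  rwa [iSup_singleton] at this

end Past

section Recursion

variable {Ω κ : Type*} {m0 : MeasurableSpace Ω} [Fintype κ] {A : Matrix κ κ ℝ} {μ : ℝ}
  {x y : ℕ → Ω → κ → ℝ}

lemma apply_succ_of_recursion (hyrec : ∀ t ω, y (t + 1) ω = A.mulVec (y t ω) + μ • x (t + 1) ω)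
    (t : ℕ) (b : κ) :
    (fun ω => y (t + 1) ω b) = fun ω => ∑ k, A b k * y t ω k + μ * x (t + 1) ω b := by
  funext ω
  simp [hyrec, mulVec, dotProduct]

lemma measurable_pastSigma_of_recursion (hy0 : ∀ ω, y 0 ω = μ • x 0 ω)
    (hyrec : ∀ t ω, y (t + 1) ω = A.mulVec (y t ω) + μ • x (t + 1) ω) (t : ℕ) (b : κ) :
    Measurable[pastSigma x (t + 1)] (fun ω => y t ω b) := by
  induction t generalizing b with
  | zero =>
    simp only [hy0, Pi.smul_apply, smul_eq_mul]
    exact (measurable_pastSigma zero_lt_one b).const_mul μ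
  | succ t ih =>
    rw [apply_succ_of_recursion hyrec]
    exact (Finset.measurable_sum _ fun k _ =>
      ((ih k).mono (pastSigma_mono (t + 1).le_succ) le_rfl).const_mul _).add
      ((measurable_pastSigma t.succ.lt_succ_self b).const_mul μ)

lemma memLp_of_recursion {P : Measure Ω} {p : ENNReal} (hy0 : ∀ ω, y 0 ω = μ • x 0 ω)
    (hyrec : ∀ t ω, y (t + 1) ω = A.mulVec (y t ω) + μ • x (t + 1) ω)
    (hx : ∀ s k, MemLp (fun ω => x s ω k) p P) (t : ℕ) (b : κ) :
    MemLp (fun ω => y t ω b) p P := by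
  induction t generalizing b with
  | zero =>
    simp only [hy0, Pi.smul_apply, smul_eq_mul]
    exact (hx 0 b).const_mul μ
  | succ t ih =>
    rw [apply_succ_of_recursion hyrec]
    exact (memLp_finsetSum _ fun k _ => (ih k).const_mul _).add ((hx _ b).const_mul μ)

end Recursion

theorem total_variance_sample_average_noise_state_general
    {Ω : Type*} [MeasurableSpace Ω] (P : Measure Ω) [IsProbabilityMeasure P]
    (N : ℕ) (μ : ℝ)
    (A : Matrix (Fin N) (Fin N) ℝ)
    (x : ℕ → Ω → Fin N → ℝ)
    (hxmeas : ∀ t k, Measurable (fun ω => x t ω k))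
    (hxindep : iIndepFun
      (fun (p : ℕ × Fin N) ω => x p.1 ω p.2) P)
    (hxgauss : ∀ t k, P.map (fun ω => x t ω k) = gaussianReal 0 1)
    (y : ℕ → Ω → Fin N → ℝ)
    (hy0 : ∀ ω, y 0 ω = μ • x 0 ω)
    (hyrec : ∀ t ω, y (t + 1) ω = A.mulVec (y t ω) + μ • x (t + 1) ω)
    (j : ℕ) (hj : 1 ≤ j) (n : ℕ) :
    ∑ a : Fin N, ∑ b : Fin N,
        variance (fun ω => (n : ℝ)⁻¹ * ∑ t ∈ Finset.Icc 1 n, x (t + j) ω a * y t ω b) P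
      = (N : ℝ) / (n : ℝ) ^ 2
          * ∑ t ∈ Finset.Icc 1 n, ∑ i : Fin N, ∫ ω, y t ω i * y t ω i ∂P := by
  have hlaw : ∀ t k, HasLaw (fun ω => x t ω k) (gaussianReal 0 1) P :=
    fun t k => ⟨(hxmeas t k).aemeasurable, hxgauss t k⟩
  let 𝓕 : Filtration ℕ ‹MeasurableSpace Ω› :=
    ⟨fun t => pastSigma x (t + j), fun _ _ h => pastSigma_mono (by omega),
      fun _ => pastSigma_le hxmeas _⟩
  have hvar : ∀ a b, Var[fun ω => ∑ t ∈ Finset.Icc 1 n, x (t + j) ω a * y t ω b; P]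
      = ∑ t ∈ Finset.Icc 1 n, ∫ ω, y t ω b * y t ω b ∂P := fun a b => by
    simp_rw [← sq]
    exact variance_sum_mul_eq_sum_integral_sq (𝓕 := 𝓕) (ξ := fun t ω => x (t + j) ω a)
      (η := fun t ω => y t ω b)
      (fun t => measurable_pastSigma (by omega) a)
      (fun t => indep_comap_pastSigma hxmeas hxindep le_rfl a)
      (fun t => (hlaw _ a).hasGaussianLaw.memLp_two)
      (fun t => (hlaw _ a).integral_eq.trans integral_id_gaussianReal)
      (fun t => by simpa using (hlaw _ a).variance_eq.trans variance_id_gaussianReal)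
      (fun t => (measurable_pastSigma_of_recursion hy0 hyrec t b).mono
        (pastSigma_mono (by omega)) le_rfl)
      (fun t => memLp_of_recursion hy0 hyrec (fun s k => (hlaw s k).hasGaussianLaw.memLp_two) t b)
      _
  simp_rw [variance_const_mul, hvar, ← Finset.mul_sum, Finset.sum_const, Finset.card_univ,
    Fintype.card_fin, Finset.sum_comm (s := Finset.Icc 1 n)]
  ring

/-- For every `j ≥ 1` and every `n ≥ 1`, the total variance of the sample average
`(1/n) ∑_{t=1}^{n} x_{t+j} yₜᵀ` equals `(N/n²) ∑_{t=1}^{n} Tr[R₀(t)]`, where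
`R₀(t) = E[yₜ yₜᵀ]`. -/
theorem total_variance_sample_average_noise_state
    {Ω : Type*} [MeasurableSpace Ω] (P : Measure Ω) [IsProbabilityMeasure P]
    (N : ℕ) (hN : 1 ≤ N) (μ : ℝ) (hμ : μ ∈ Set.Ioo (0 : ℝ) 1)
    (A : Matrix (Fin N) (Fin N) ℝ) (hA : A.IsSymm)
    (x : ℕ → Ω → Fin N → ℝ)
    (hxmeas : ∀ t k, Measurable (fun ω => x t ω k))
    (hxindep : iIndepFun
      (fun (p : ℕ × Fin N) ω => x p.1 ω p.2) P)
    (hxgauss : ∀ t k, P.map (fun ω => x t ω k) = gaussianReal 0 1)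
    (y : ℕ → Ω → Fin N → ℝ)
    (hy0 : ∀ ω, y 0 ω = μ • x 0 ω)
    (hyrec : ∀ t ω, y (t + 1) ω = A.mulVec (y t ω) + μ • x (t + 1) ω)
    (j : ℕ) (hj : 1 ≤ j) (n : ℕ) (hn : 1 ≤ n) :
    ∑ a : Fin N, ∑ b : Fin N,
        variance (fun ω => (n : ℝ)⁻¹ * ∑ t ∈ Finset.Icc 1 n, x (t + j) ω a * y t ω b) P
      = (N : ℝ) / (n : ℝ) ^ 2
          * ∑ t ∈ Finset.Icc 1 n, ∑ i : Fin N, ∫ ω, y t ω i * y t ω i ∂P :=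
  total_variance_sample_average_noise_state_general P N μ A x hxmeas hxindep hxgauss y hy0 hyrec j
    hj n
end
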